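/- Let n ≥ 1 and let w be a GL(3,ℝ)-weighting of the hypercube graph Q_n. Then the weight of every closed walk in Q_n equals the identity element of GL(3,ℝ) if and only if w has commutative 2-faces. -/

import Mathlib

/-!
If every closed walk has weight one, this applies in particular to the boundary of each 2-face.
Conversely, with commutative 2-faces the weight of a monotone path from the origin to `x` does
not depend on the order in which the coordinates are raised, since swapping two consecutive
raises replaces one side of a 2-face by the other. This weight is a potential `φ` with
`w x y = (φ x)⁻¹ * φ y` along every edge, so the weight of a walk telescopes to
`(φ u)⁻¹ * φ v`, which is one when `u = v`.
-/

open SimpleGraph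

/-- The hypercube graph `Q_n` on vertices `Fin n → Bool`, two vertices being
adjacent iff they differ in exactly one coordinate (Hamming distance 1). -/
def Qgraph (n : ℕ) : SimpleGraph (Fin n → Bool) where
  Adj x y := hammingDist x y = 1
  symm := by
    constructor
    intro x y h
    rwa [hammingDist_comm]
  loopless := by
    constructor
    intro x h
    simp [hammingDist_self] at h

/-- A `G`-weighting of `Q_n`: an assignment of elements of `G` to ordered pairs of
adjacent vertices such that reversing a pair inverts the weight. -/
def IsWeighting {n : ℕ} {G : Type*} [Group G]
    (w : (Fin n → Bool) → (Fin n → Bool) → G) : Prop :=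
  ∀ x y, (Qgraph n).Adj x y → w y x = (w x y)⁻¹

/-- The weight of a walk: the ordered product of the weights of its steps. -/
def walkWeight {n : ℕ} {G : Type*} [Group G]
    (w : (Fin n → Bool) → (Fin n → Bool) → G) {u v : Fin n → Bool}
    (p : (Qgraph n).Walk u v) : G :=
  (p.darts.map fun d => w d.toProd.1 d.toProd.2).prod

/-- `w` has commutative 2-faces. -/
def CommutativeTwoFaces {n : ℕ} {G : Type*} [Group G]
    (w : (Fin n → Bool) → (Fin n → Bool) → G) : Prop :=
  ∀ (x : Fin n → Bool) (i j : Fin n), i ≠ j → x i = false → x j = false →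
    w x (Function.update x i true) *
      w (Function.update x i true)
        (Function.update (Function.update x i true) j true) =
    w x (Function.update x j true) *
      w (Function.update x j true)
        (Function.update (Function.update x j true) i true)

open Function

namespace Qgraph

variable {n : ℕ}

theorem adj_iff_exists_update {x y : Fin n → Bool} :
    (Qgraph n).Adj x y ↔ ∃ i, y = update x i (!x i) := by
  have hflip : ∀ i, y = update x i (!x i) ↔ ∀ j, x j ≠ y j ↔ j = i := fun i => by
    rw [funext_iff]
    refine forall_congr' fun j => ?_
    by_cases hj : j = i
    · subst hj; cases x j <;> cases y j <;> simp
    · simp [hj, eq_comm]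
  change (Finset.univ.filter fun j => x j ≠ y j).card = 1 ↔ _
  simp only [Finset.card_eq_one, Finset.ext_iff, Finset.mem_filter, Finset.mem_univ, true_and,
    Finset.mem_singleton, hflip]

theorem adj_update_true {x : Fin n → Bool} {i : Fin n} (h : x i = false) :
    (Qgraph n).Adj x (update x i true) :=
  adj_iff_exists_update.2 ⟨i, by rw [h]; rfl⟩

end Qgraph

section Raising

variable {n : ℕ}

def raiseCoords (L : List (Fin n)) (v : Fin n → Bool) : Fin n → Bool :=
  fun j => decide (j ∈ L) || v j

theorem raiseCoords_cons (i : Fin n) (L : List (Fin n)) (v : Fin n → Bool) :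
    raiseCoords (i :: L) v = raiseCoords L (update v i true) := by
  funext j
  by_cases hj : j = i
  · subst hj; simp [raiseCoords]
  · simp [raiseCoords, hj]

def trueCoords (x : Fin n → Bool) : List (Fin n) := (List.finRange n).filter (x ·)

theorem nodup_trueCoords (x : Fin n → Bool) : (trueCoords x).Nodup :=
  (List.nodup_finRange n).filter _

theorem mem_trueCoords {x : Fin n → Bool} {j : Fin n} : j ∈ trueCoords x ↔ x j = true := by
  simp [trueCoords]

theorem raiseCoords_trueCoords (x : Fin n → Bool) :
    raiseCoords (trueCoords x) (fun _ => false) = x := by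
  funext j
  simp [raiseCoords, mem_trueCoords]

end Raising

section Potential

variable {n : ℕ} {G : Type*} [Group G] (w : (Fin n → Bool) → (Fin n → Bool) → G)

theorem walkWeight_nil (u : Fin n → Bool) : walkWeight w (.nil : (Qgraph n).Walk u u) = 1 := by
  simp [walkWeight]

theorem walkWeight_cons {u v x : Fin n → Bool} (h : (Qgraph n).Adj u v)
    (p : (Qgraph n).Walk v x) :
    walkWeight w (.cons h p) = w u v * walkWeight w p := by
  simp [walkWeight]

theorem walkWeight_eq_of_potential {φ : (Fin n → Bool) → G}
    (hφ : ∀ x y, (Qgraph n).Adj x y → w x y = (φ x)⁻¹ * φ y) {u v : Fin n → Bool}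
    (p : (Qgraph n).Walk u v) : walkWeight w p = (φ u)⁻¹ * φ v := by
  induction p with
  | nil => rw [walkWeight_nil, inv_mul_cancel]
  | cons h p ih => rw [walkWeight_cons, ih, hφ _ _ h]; group

def raisingWeight : List (Fin n) → (Fin n → Bool) → G
  | [], _ => 1
  | i :: L, v => w v (update v i true) * raisingWeight L (update v i true)

theorem raisingWeight_append (L M : List (Fin n)) (v : Fin n → Bool) :
    raisingWeight w (L ++ M) v = raisingWeight w L v * raisingWeight w M (raiseCoords L v) := by
  induction L generalizing v with
  | nil => rw [List.nil_append, raisingWeight, one_mul]; rfl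
  | cons i L ih => simp [raisingWeight, ih, raiseCoords_cons, mul_assoc]

variable {w}

theorem raisingWeight_perm (hc : CommutativeTwoFaces w) {L L' : List (Fin n)} (hp : L.Perm L')
    {v : Fin n → Bool} (hL : L.Nodup) (hv : ∀ j ∈ L, v j = false) :
    raisingWeight w L v = raisingWeight w L' v := by
  induction hp generalizing v with
  | nil => rfl
  | cons i _ ih =>
    obtain ⟨hi, hL⟩ := List.nodup_cons.1 hL
    refine congrArg _ (ih hL fun j hj => ?_)
    rw [update_of_ne (ne_of_mem_of_not_mem hj hi)]
    exact hv j (List.mem_cons_of_mem _ hj)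
  | swap i j L =>
    have hij : i ≠ j := fun h => (List.nodup_cons.1 hL).1 (h ▸ List.mem_cons_self)
    have hvi : v i = false := hv i (by simp)
    have hvj : v j = false := hv j (by simp)
    simp only [raisingWeight, ← mul_assoc]
    rw [hc v j i hij.symm hvj hvi, update_comm hij]
  | trans hp₁ _ ih₁ ih₂ =>
    exact (ih₁ hL hv).trans (ih₂ (hp₁.nodup_iff.1 hL) fun j hj => hv j (hp₁.mem_iff.2 hj))

variable (w)

def potential (x : Fin n → Bool) : G := raisingWeight w (trueCoords x) fun _ => false

variable {w}

theorem potential_update_true (hc : CommutativeTwoFaces w) {x : Fin n → Bool} {i : Fin n}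
    (hxi : x i = false) :
    potential w (update x i true) = potential w x * w x (update x i true) := by
  have hi : i ∉ trueCoords x := by simp [mem_trueCoords, hxi]
  have hperm : (trueCoords (update x i true)).Perm (trueCoords x ++ [i]) := by
    refine (List.perm_ext_iff_of_nodup (nodup_trueCoords _)
      ((nodup_trueCoords x).append (List.nodup_singleton i) (by simpa))).2 fun j => ?_
    by_cases hj : j = i
    · subst hj; simp [mem_trueCoords]
    · simp [mem_trueCoords, hj]
  rw [potential, raisingWeight_perm hc hperm (nodup_trueCoords _) (by simp),
    raisingWeight_append, raiseCoords_trueCoords]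
  simp [potential, raisingWeight]

theorem exists_potential_of_commutativeTwoFaces (hw : IsWeighting w)
    (hc : CommutativeTwoFaces w) :
    ∃ φ : (Fin n → Bool) → G, ∀ x y, (Qgraph n).Adj x y → w x y = (φ x)⁻¹ * φ y := by
  refine ⟨potential w, fun x y hxy => ?_⟩
  obtain ⟨i, rfl⟩ := Qgraph.adj_iff_exists_update.1 hxy
  cases hxi : x i with
  | false =>
    rw [Bool.not_false, potential_update_true hc hxi]
    group
  | true =>
    rw [Bool.not_true]
    set y := update x i false
    have hyi : y i = false := update_self ..
    have hx : x = update y i true := by rw [update_idem, ← hxi, update_eq_self]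
    rw [hx, hw _ _ (Qgraph.adj_update_true hyi), potential_update_true hc hyi]
    group

theorem commutativeTwoFaces_of_walkWeight_eq_one (hw : IsWeighting w)
    (h : ∀ (u : Fin n → Bool) (p : (Qgraph n).Walk u u), walkWeight w p = 1) :
    CommutativeTwoFaces w := by
  intro x i j hij hxi hxj
  have hai : update x i true j = false := by rwa [update_of_ne hij.symm]
  have hbj : update x j true i = false := by rwa [update_of_ne hij]
  have htop : update (update x j true) i true = update (update x i true) j true :=
    update_comm hij.symm ..
  have hxb := Qgraph.adj_update_true hxj
  have hbc := Qgraph.adj_update_true hbj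
  rw [htop] at hbc ⊢
  have hsquare := h x <| .cons (Qgraph.adj_update_true hxi) <| .cons (Qgraph.adj_update_true hai) <|
    .cons hbc.symm <| .cons hxb.symm .nil
  rw [walkWeight_cons, walkWeight_cons, walkWeight_cons, walkWeight_cons, walkWeight_nil,
    mul_one, hw _ _ hbc, hw _ _ hxb, ← mul_inv_rev, ← mul_assoc] at hsquare
  exact mul_inv_eq_one.1 hsquare

end Potential

theorem weight_closed_walk_eq_one_iff_commutativeTwoFaces_general
    (n : ℕ)
    (w : (Fin n → Bool) → (Fin n → Bool) → Matrix.GeneralLinearGroup (Fin 3) ℝ)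
    (hw : IsWeighting w) :
    (∀ (u : Fin n → Bool) (p : (Qgraph n).Walk u u), walkWeight w p = 1) ↔
      CommutativeTwoFaces w := by
  refine ⟨commutativeTwoFaces_of_walkWeight_eq_one hw, fun hc u p => ?_⟩
  obtain ⟨φ, hφ⟩ := exists_potential_of_commutativeTwoFaces hw hc
  rw [walkWeight_eq_of_potential w hφ, inv_mul_cancel]

theorem weight_closed_walk_eq_one_iff_commutativeTwoFaces
    (n : ℕ) (hn : 1 ≤ n)
    (w : (Fin n → Bool) → (Fin n → Bool) → Matrix.GeneralLinearGroup (Fin 3) ℝ)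
    (hw : IsWeighting w) :
    (∀ (u : Fin n → Bool) (p : (Qgraph n).Walk u u), walkWeight w p = 1) ↔
      CommutativeTwoFaces w :=
  weight_closed_walk_eq_one_iff_commutativeTwoFaces_general n w hw
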